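/- Let V₄ be the space of complex homogeneous polynomials of degree 4 in z₀, z₁ with the SU(2)-action (ρ₄(g)f)(z) = f(z·g), and let K̃_{[a]} ⊂ SU(2) be the subgroup of order 24 generated by the order-8 quaternion group K̃₀ = ⟨±I, ±[[0,−1],[1,0]], ±[[i,0],[0,−i]], ±[[0,i],[i,0]]⟩ together with B = [[(1+i)/2, (1+i)/2], [(−1+i)/2, (1−i)/2]]. Then the fixed subspace (V₄)^{K̃_{[a]}} is zero. -/
import Mathlib


open MvPolynomial

/-- The action of a `2×2` complex matrix `g` on polynomials in `z₀, z₁` given by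
`(ρ(g) f)(z) = f(z·g)`. -/
noncomputable def actPoly (g : Matrix (Fin 2) (Fin 2) ℂ) (f : MvPolynomial (Fin 2) ℂ) :
    MvPolynomial (Fin 2) ℂ :=
  MvPolynomial.aeval (fun k : Fin 2 => ∑ i : Fin 2, MvPolynomial.C (g i k) * X i) f

/-- The quaternion group of order `8` in `SU(2)`. -/
noncomputable def Q8 : Set (Matrix (Fin 2) (Fin 2) ℂ) :=
  {1, -1, !![0, -1; 1, 0], -(!![0, -1; 1, 0]),
   !![Complex.I, 0; 0, -Complex.I], -(!![Complex.I, 0; 0, -Complex.I]),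
   !![0, Complex.I; Complex.I, 0], -(!![0, Complex.I; Complex.I, 0])}

/-- The extra generator `B` of the order-24 group `K̃_{[a]}`. -/
noncomputable def Bmat : Matrix (Fin 2) (Fin 2) ℂ :=
  !![(1 + Complex.I) / 2, (1 + Complex.I) / 2;
     (-1 + Complex.I) / 2, (1 - Complex.I) / 2]

noncomputable abbrev mon (k : ℕ) : Fin 2 →₀ ℕ := Finsupp.single 0 k + Finsupp.single 1 (4 - k)

lemma mon_apply0 (k : ℕ) : (mon k) 0 = k := by
  simp [Finsupp.single_apply]

lemma mon_ne {j k : ℕ} (h : j ≠ k) : mon j ≠ mon k := by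
  intro hcon
  exact h (by rw [← mon_apply0 j, ← mon_apply0 k, hcon])

lemma eval_mon (k : ℕ) (c a b : ℂ) :
    eval ![a, b] (monomial (mon k) c) = c * a ^ k * b ^ (4 - k) := by
  rw [eval_monomial, Finsupp.prod_add_index (by simp) (by simp [pow_add]),
    Finsupp.prod_single_index (by simp), Finsupp.prod_single_index (by simp)]
  simp [mul_assoc]

lemma rep4 (f : MvPolynomial (Fin 2) ℂ) (hf : f.IsHomogeneous 4) :
    f = monomial (mon 0) (coeff (mon 0) f) + monomial (mon 1) (coeff (mon 1) f) +
        monomial (mon 2) (coeff (mon 2) f) + monomial (mon 3) (coeff (mon 3) f) +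
        monomial (mon 4) (coeff (mon 4) f) := by
  classical
  have hsub : f.support ⊆ ({mon 0, mon 1, mon 2, mon 3, mon 4} : Finset (Fin 2 →₀ ℕ)) := by
    intro v hv
    have hw := hf (mem_support_iff.mp hv)
    have hwv : (Finsupp.weight 1) v = v 0 + v 1 := by
      rw [Finsupp.weight_apply, Finsupp.sum_fintype]
      · simp [Fin.sum_univ_two]
      · intro i; simp
    rw [hwv] at hw
    have hv0 : v 0 ≤ 4 := by omega
    have hveq : v = mon (v 0) := by
      ext i
      fin_cases i <;> simp [Finsupp.single_apply] <;> omega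
    simp only [Finset.mem_insert, Finset.mem_singleton]
    interval_cases h : v 0 <;> simp [hveq]
  have hrep := Finset.sum_subset hsub
    (fun x _ hx => by simp [MvPolynomial.notMem_support_iff.mp hx])
    (f := fun v => monomial v (coeff v f))
  rw [support_sum_monomial_coeff] at hrep
  have h0 : mon 0 ∉ ({mon 1, mon 2, mon 3, mon 4} : Finset (Fin 2 →₀ ℕ)) := by
    simp only [Finset.mem_insert, Finset.mem_singleton]
    push_neg
    exact ⟨mon_ne (by norm_num), mon_ne (by norm_num), mon_ne (by norm_num), mon_ne (by norm_num)⟩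
  have h1 : mon 1 ∉ ({mon 2, mon 3, mon 4} : Finset (Fin 2 →₀ ℕ)) := by
    simp only [Finset.mem_insert, Finset.mem_singleton]
    push_neg
    exact ⟨mon_ne (by norm_num), mon_ne (by norm_num), mon_ne (by norm_num)⟩
  have h2 : mon 2 ∉ ({mon 3, mon 4} : Finset (Fin 2 →₀ ℕ)) := by
    simp only [Finset.mem_insert, Finset.mem_singleton]
    push_neg
    exact ⟨mon_ne (by norm_num), mon_ne (by norm_num)⟩
  have h3 : mon 3 ∉ ({mon 4} : Finset (Fin 2 →₀ ℕ)) := by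
    simp only [Finset.mem_singleton]
    exact mon_ne (by norm_num)
  conv_lhs => rw [hrep]
  rw [Finset.sum_insert h0, Finset.sum_insert h1, Finset.sum_insert h2,
    Finset.sum_insert h3, Finset.sum_singleton]
  ring

lemma eval_actPoly (g : Matrix (Fin 2) (Fin 2) ℂ) (f : MvPolynomial (Fin 2) ℂ) (a b : ℂ) :
    eval ![a, b] (actPoly g f) =
      eval ![g 0 0 * a + g 1 0 * b, g 0 1 * a + g 1 1 * b] f := by
  unfold actPoly
  rw [aeval_def, eval_eval₂]
  congr 1
  · ext r : 1; simp
  · funext k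
    fin_cases k <;> simp [Fin.sum_univ_two]

/-- the subspace of `V₄` fixed by the order-24 group generated by the
quaternion group `K̃₀` and `B` is zero. -/
theorem stmt11 (f : MvPolynomial (Fin 2) ℂ) (hf : f.IsHomogeneous 4)
    (hfix : ∀ g ∈ Q8, actPoly g f = f) (hB : actPoly Bmat f = f) :
    f = 0 := by
  classical
  set c0 := coeff (mon 0) f with hc0def
  set c1 := coeff (mon 1) f with hc1def
  set c2 := coeff (mon 2) f with hc2def
  set c3 := coeff (mon 3) f with hc3def
  set c4 := coeff (mon 4) f with hc4def
  have key : ∀ a b : ℂ, eval ![a, b] f =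
      c4 * a ^ 4 + c3 * a ^ 3 * b + c2 * a ^ 2 * b ^ 2 + c1 * a * b ^ 3 + c0 * b ^ 4 := by
    intro a b
    conv_lhs => rw [rep4 f hf]
    simp only [map_add, eval_mon]
    norm_num
    ring
  -- diagonal element
  have hg1 : (!![Complex.I, 0; 0, -Complex.I]) ∈ Q8 := by
    unfold Q8; simp
  have E1 : ∀ a b : ℂ,
      c4 * (Complex.I * a) ^ 4 + c3 * (Complex.I * a) ^ 3 * (-Complex.I * b) +
      c2 * (Complex.I * a) ^ 2 * (-Complex.I * b) ^ 2 +
      c1 * (Complex.I * a) * (-Complex.I * b) ^ 3 + c0 * (-Complex.I * b) ^ 4 =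
      c4 * a ^ 4 + c3 * a ^ 3 * b + c2 * a ^ 2 * b ^ 2 + c1 * a * b ^ 3 + c0 * b ^ 4 := by
    intro a b
    have h := congrArg (eval ![a, b]) (hfix _ hg1)
    have hpt : ![(!![Complex.I, 0; 0, -Complex.I] : Matrix (Fin 2) (Fin 2) ℂ) 0 0 * a +
        !![Complex.I, 0; 0, -Complex.I] 1 0 * b,
        !![Complex.I, 0; 0, -Complex.I] 0 1 * a + !![Complex.I, 0; 0, -Complex.I] 1 1 * b] =
        ![Complex.I * a, -Complex.I * b] := by
      funext i; fin_cases i <;> simp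
    rw [eval_actPoly, hpt, key, key] at h
    rw [← h]
  have hg2 : (!![(0:ℂ), -1; 1, 0]) ∈ Q8 := by
    unfold Q8; simp
  have E2 : ∀ a b : ℂ,
      c4 * b ^ 4 + c3 * b ^ 3 * (-a) + c2 * b ^ 2 * (-a) ^ 2 +
      c1 * b * (-a) ^ 3 + c0 * (-a) ^ 4 =
      c4 * a ^ 4 + c3 * a ^ 3 * b + c2 * a ^ 2 * b ^ 2 + c1 * a * b ^ 3 + c0 * b ^ 4 := by
    intro a b
    have h := congrArg (eval ![a, b]) (hfix _ hg2)
    have hpt : ![(!![(0:ℂ), -1; 1, 0] : Matrix (Fin 2) (Fin 2) ℂ) 0 0 * a +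
        !![(0:ℂ), -1; 1, 0] 1 0 * b,
        !![(0:ℂ), -1; 1, 0] 0 1 * a + !![(0:ℂ), -1; 1, 0] 1 1 * b] = ![b, -a] := by
      funext i; fin_cases i <;> simp
    rw [eval_actPoly, hpt, key, key] at h
    rw [← h]
  have EB : ∀ a b : ℂ,
      (let a' := (1 + Complex.I) / 2 * a + (-1 + Complex.I) / 2 * b;
       let b' := (1 + Complex.I) / 2 * a + (1 - Complex.I) / 2 * b;
       c4 * a' ^ 4 + c3 * a' ^ 3 * b' + c2 * a' ^ 2 * b' ^ 2 + c1 * a' * b' ^ 3 + c0 * b' ^ 4) =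
      c4 * a ^ 4 + c3 * a ^ 3 * b + c2 * a ^ 2 * b ^ 2 + c1 * a * b ^ 3 + c0 * b ^ 4 := by
    intro a b
    have h := congrArg (eval ![a, b]) hB
    have hpt : ![Bmat 0 0 * a + Bmat 1 0 * b, Bmat 0 1 * a + Bmat 1 1 * b] =
        ![(1 + Complex.I) / 2 * a + (-1 + Complex.I) / 2 * b,
          (1 + Complex.I) / 2 * a + (1 - Complex.I) / 2 * b] := by
      funext i; fin_cases i <;> simp [Bmat]
    rw [eval_actPoly, hpt, key, key] at h
    exact h
  have hI : Complex.I ^ 2 = -1 := Complex.I_sq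
  have h1 := E1 1 1
  have h2 := E1 2 1
  have h3 := E2 1 0
  have h4 := EB 1 0
  have h5 := EB 1 1
  simp only [] at h4 h5
  have k1 : (-2 : ℂ) * c3 - 2 * c1 = 0 := by
    linear_combination h1 + ((Complex.I ^ 2 - 1) * (c3 + c1 - c4 - c2 - c0)) * hI
  have k2 : (-16 : ℂ) * c3 - 4 * c1 = 0 := by
    linear_combination h2 + (c3 * (-8 + 8 * Complex.I ^ 2) + c1 * (-2 + 2 * Complex.I ^ 2) +
      c4 * (16 - 16 * Complex.I ^ 2) + c2 * (4 - 4 * Complex.I ^ 2) +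
      c0 * (1 - Complex.I ^ 2)) * hI
  have k3 : c0 - c4 = 0 := by linear_combination h3
  have k4 : -(5 * c4 + c3 + c2 + c1 + c0) / 4 = 0 := by
    linear_combination h4 + ((c4 + c3 + c2 + c1 + c0) *
      (-(5 : ℂ)/16 - (1/4) * Complex.I - (1/16) * Complex.I ^ 2)) * hI
  have k5 : -c3 - Complex.I * c3 - 2 * c2 - c1 + Complex.I * c1 = 0 := by
    linear_combination h5 + (c3 * (-Complex.I) + c2 * (-1) + c4 * (1 - Complex.I ^ 2)) * hI
  have hc3 : c3 = 0 := by linear_combination (1/6 : ℂ) * k1 - (1/12 : ℂ) * k2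
  have hc1 : c1 = 0 := by linear_combination (-2/3 : ℂ) * k1 + (1/12 : ℂ) * k2
  have hc2 : c2 = 0 := by
    linear_combination (-1/2 : ℂ) * k5 - ((1 + Complex.I)/2) * hc3 - ((1 - Complex.I)/2) * hc1
  have hc4 : c4 = 0 := by
    linear_combination (-2/3 : ℂ) * k4 + (-1/6 : ℂ) * k3 + (-1/6 : ℂ) * hc3 +
      (-1/6 : ℂ) * hc2 + (-1/6 : ℂ) * hc1
  have hc0 : c0 = 0 := by linear_combination k3 + hc4
  rw [rep4 f hf, ← hc0def, ← hc1def, ← hc2def, ← hc3def, ← hc4def,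
    hc0, hc1, hc2, hc3, hc4]
  simp
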